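/- Let Θ* be a symmetric positive definite d×d matrix and c ≥ 0. Then the function H ↦ −½ ln Det(I − (Θ*)^{1/2}H(Θ*)^{1/2}) + c · ‖(Θ*)^{1/2}H(Θ*)^{1/2}‖_F² / (1 − ‖(Θ*)^{1/2}H(Θ*)^{1/2}‖) is convex on the open convex set ℋ° = {H symmetric d×d : −(Θ*)⁻¹ ≺ H ≺ (Θ*)⁻¹}. -/

import Mathlib

open Matrix

/-- The spectral norm of a square real matrix. -/
noncomputable def specNorm {d : ℕ} (M : Matrix (Fin d) (Fin d) ℝ) : ℝ :=
  ‖Matrix.toEuclideanCLM (𝕜 := ℝ) M‖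

/-- The Frobenius norm of a square real matrix. -/
noncomputable def frobNorm {d : ℕ} (M : Matrix (Fin d) (Fin d) ℝ) : ℝ :=
  Real.sqrt (∑ i, ∑ j, (M i j)^2)

/-- The square root of a positive semidefinite matrix, as defined in the older Mathlib
(`Matrix.PosSemidef.sqrt`, removed since). -/
noncomputable def Matrix.PosSemidef.sqrt {n : Type*} [Fintype n] [DecidableEq n]
    {A : Matrix n n ℝ} (hA : A.PosSemidef) : Matrix n n ℝ :=
  hA.1.eigenvectorUnitary * diagonal ((fun x : ℝ => Real.sqrt x) ∘ hA.1.eigenvalues) *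
    (star hA.1.eigenvectorUnitary : Matrix n n ℝ)

/-!
Conjugation by `S = (Θ*)^{1/2}` maps `ℋ°` linearly and bijectively onto the order interval
`{M : -1 ≺ M ≺ 1}`, so it suffices to show that
`g M = -½ log det (1 - M) + c ‖M‖_F² / (1 - ‖M‖)` is convex there. The log-det term is convex
because `log det` is concave on positive definite matrices: congruence by `X^{1/2}` reduces
`log det (a X + b Y)` to `log det (a + b Z)`, i.e. to concavity of `log` on the eigenvalues of
`Z`. The second term is `p² / (1 - q)` for two norms `p, q` with `q < 1`, which is convex by
Sedrakyan's inequality `(a x + b y)² / (a s + b t) ≤ a x² / s + b y² / t`.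
-/

namespace Matrix

variable {n : Type*}

lemma convex_setOf_posDef : Convex ℝ {A : Matrix n n ℝ | A.PosDef} := by
  intro X hX Y hY a b ha hb hab
  rcases ha.eq_or_lt with rfl | ha
  · simpa [show b = 1 by linarith] using hY
  · exact (hX.smul ha).add_posSemidef (hY.posSemidef.smul hb)

variable [Fintype n] [DecidableEq n]

open scoped MatrixOrder

lemma PosDef.pos_of_mem_spectrum {A : Matrix n n ℝ} (hA : A.PosDef) {x : ℝ}
    (hx : x ∈ spectrum ℝ A) : 0 < x := by
  obtain ⟨i, rfl⟩ := hA.1.spectrum_real_eq_range_eigenvalues ▸ hx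
  exact hA.eigenvalues_pos i

open scoped Matrix.Norms.L2Operator in
theorem l2_opNorm_lt_one_of_posDef {M : Matrix n n ℝ} (h₁ : (1 - M).PosDef)
    (h₂ : (1 + M).PosDef) : ‖M‖ < 1 := by
  have hM : M.IsHermitian := by simpa using isHermitian_one.sub h₁.1
  rw [← cfc_id' ℝ M]
  refine norm_cfc_lt one_pos fun x hx => ?_
  have h₁x : 1 - x ∈ spectrum ℝ (1 - M) := by
    rw [← map_one (algebraMap ℝ (Matrix n n ℝ)), ← spectrum.singleton_sub_eq]
    exact Set.sub_mem_sub rfl hx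
  have h₂x : 1 + x ∈ spectrum ℝ (1 + M) := by
    rw [← map_one (algebraMap ℝ (Matrix n n ℝ)), ← spectrum.singleton_add_eq]
    exact Set.add_mem_add rfl hx
  rw [Real.norm_eq_abs, abs_lt]
  constructor <;> linarith [h₁.pos_of_mem_spectrum h₁x, h₂.pos_of_mem_spectrum h₂x]

lemma IsHermitian.det_smul_one_add_smul {A : Matrix n n ℝ} (hA : A.IsHermitian) (a b : ℝ) :
    (a • (1 : Matrix n n ℝ) + b • A).det = ∏ i, (a + b * hA.eigenvalues i) := by
  have hcfc : a • (1 : Matrix n n ℝ) + b • A = cfc (fun x => a + b * x) A := by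
    rw [cfc_add .., cfc_const .., cfc_const_mul .., cfc_id' ..]
    simp [Algebra.algebraMap_eq_smul_one]
  rw [hcfc, hA.cfc_eq]
  simp [IsHermitian.cfc, -Unitary.conjStarAlgAut_apply]

lemma PosDef.mul_log_det_le_log_det_smul_one_add_smul {Z : Matrix n n ℝ} (hZ : Z.PosDef)
    {a b : ℝ} (ha : 0 ≤ a) (hb : 0 ≤ b) (hab : a + b = 1) :
    b * Real.log Z.det ≤ Real.log (a • (1 : Matrix n n ℝ) + b • Z).det := by
  have hpos := hZ.eigenvalues_pos
  have hpos' (i : n) : 0 < a + b * hZ.1.eigenvalues i := by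
    rcases hb.eq_or_lt with rfl | hb
    · linarith [show a + 0 * hZ.1.eigenvalues i = a by ring]
    · have := hpos i; positivity
  rw [hZ.1.det_smul_one_add_smul, hZ.1.det_eq_prod_eigenvalues]
  simp only [RCLike.ofReal_real_eq_id, id_eq]
  rw [Real.log_prod fun i _ => (hpos' i).ne', Real.log_prod fun i _ => (hpos i).ne',
    Finset.mul_sum]
  refine Finset.sum_le_sum fun i _ => ?_
  simpa using strictConcaveOn_log_Ioi.concaveOn.2 (Set.mem_Ioi.2 one_pos)
    (Set.mem_Ioi.2 (hpos i)) ha hb hab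

theorem concaveOn_log_det :
    ConcaveOn ℝ {A : Matrix n n ℝ | A.PosDef} (fun A => Real.log A.det) := by
  refine ⟨convex_setOf_posDef, fun X hX Y hY a b ha hb hab => ?_⟩
  set R := CFC.sqrt X
  have hR : R.IsHermitian := (CFC.sqrt_nonneg X).posSemidef.1
  have hRR : R * R = X := CFC.sqrt_mul_sqrt_self X hX.posSemidef.nonneg
  have hRu : IsUnit R := (CFC.isUnit_sqrt_iff X hX.posSemidef.nonneg).2 hX.isUnit
  have hRdet : IsUnit R.det := (isUnit_iff_isUnit_det R).1 hRu
  set Z := R⁻¹ * Y * R⁻¹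
  have hZ : Z.PosDef := by
    have := (IsUnit.posDef_star_left_conjugate_iff (isUnit_nonsing_inv_iff.2 hRu)).2 hY
    rwa [star_eq_conjTranspose, hR.inv] at this
  have hRZR : R * Z * R = Y := by
    simp only [Z, ← mul_assoc, mul_nonsing_inv _ hRdet, one_mul]
    rw [mul_assoc, nonsing_inv_mul _ hRdet, mul_one]
  have hcomb : a • X + b • Y = R * (a • 1 + b • Z) * R := by
    rw [← hRR, ← hRZR]; noncomm_ring
  have hdetX : R.det * R.det = X.det := by rw [← det_mul, hRR]
  have hX0 := hX.det_pos
  have hlogY : Real.log Y.det = Real.log X.det + Real.log Z.det := by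
    rw [← Real.log_mul hX0.ne' hZ.det_pos.ne', ← hRZR, ← hdetX, det_mul, det_mul]; ring_nf
  have hlogc :
      Real.log (a • X + b • Y).det = Real.log X.det + Real.log (a • 1 + b • Z).det := by
    rw [← Real.log_mul hX0.ne' (convex_setOf_posDef PosDef.one hZ ha hb hab).det_pos.ne', hcomb,
      ← hdetX, det_mul, det_mul]; ring_nf
  have hsplit : a * Real.log X.det + b * Real.log X.det = Real.log X.det := by
    rw [← add_mul, hab, one_mul]
  have := hZ.mul_log_det_le_log_det_smul_one_add_smul ha hb hab
  simp only [smul_eq_mul]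
  rw [hlogc, hlogY]
  linarith

theorem concaveOn_log_det_one_sub :
    ConcaveOn ℝ {M : Matrix n n ℝ | (1 - M).PosDef} (fun M => Real.log (1 - M).det) :=
  concaveOn_log_det.comp_affineMap
    (AffineMap.const ℝ (Matrix n n ℝ) (1 : Matrix n n ℝ) - AffineMap.id ℝ (Matrix n n ℝ))

theorem PosSemidef.sqrt_eq_cfc_sqrt {A : Matrix n n ℝ} (hA : A.PosSemidef) :
    hA.sqrt = CFC.sqrt A := by
  rw [CFC.sqrt_eq_real_sqrt A hA.nonneg, cfcₙ_eq_cfc, hA.1.cfc_eq]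
  rfl

lemma PosDef.sqrt_mul_inv_mul_sqrt {A : Matrix n n ℝ} (hA : A.PosDef) :
    CFC.sqrt A * A⁻¹ * CFC.sqrt A = 1 := by
  have hdet : IsUnit (CFC.sqrt A).det := (isUnit_iff_isUnit_det _).1 <|
    (CFC.isUnit_sqrt_iff A hA.posSemidef.nonneg).2 hA.isUnit
  set S := CFC.sqrt A
  rw [← CFC.sqrt_mul_sqrt_self A hA.posSemidef.nonneg, mul_inv_rev, ← mul_assoc,
    mul_nonsing_inv _ hdet, one_mul, nonsing_inv_mul _ hdet]

theorem PosDef.setOf_isSymm_inv_sub_posDef_eq_preimage {Θ : Matrix n n ℝ} (hΘ : Θ.PosDef) :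
    {H : Matrix n n ℝ | H.IsSymm ∧ (Θ⁻¹ - H).PosDef ∧ (H + Θ⁻¹).PosDef} =
      LinearMap.mulLeftRight ℝ (CFC.sqrt Θ, CFC.sqrt Θ) ⁻¹'
        {M | (1 - M).PosDef ∧ (1 + M).PosDef} := by
  set S := CFC.sqrt Θ
  have hS : S.IsHermitian := (CFC.sqrt_nonneg Θ).posSemidef.1
  have hSu : IsUnit S := (CFC.isUnit_sqrt_iff Θ hΘ.posSemidef.nonneg).2 hΘ.isUnit
  have hconj (A : Matrix n n ℝ) : (S * A * S).PosDef ↔ A.PosDef := by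
    simpa only [star_eq_conjTranspose, hS.eq] using IsUnit.posDef_star_left_conjugate_iff hSu
  have hsub (H : Matrix n n ℝ) : S * (Θ⁻¹ - H) * S = 1 - S * H * S := by
    rw [mul_sub, sub_mul, hΘ.sqrt_mul_inv_mul_sqrt]
  have hadd (H : Matrix n n ℝ) : S * (H + Θ⁻¹) * S = 1 + S * H * S := by
    rw [mul_add, add_mul, hΘ.sqrt_mul_inv_mul_sqrt, add_comm]
  ext H
  simp only [Set.mem_ofPred_eq, Set.mem_preimage, LinearMap.mulLeftRight_apply, ← hsub, ← hadd,
    hconj, and_iff_right_iff_imp]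
  exact fun h => isHermitian_iff_isSymm.1 (by simpa using hΘ.inv.1.sub h.1.1)

end Matrix

lemma ConvexOn.sq_div_one_sub {E : Type*} [AddCommGroup E] [Module ℝ E] {s : Set E}
    {p q : E → ℝ} (hp : ConvexOn ℝ s p) (hp0 : ∀ x ∈ s, 0 ≤ p x) (hq : ConvexOn ℝ s q)
    (hq1 : ∀ x ∈ s, q x < 1) : ConvexOn ℝ s (fun x => p x ^ 2 / (1 - q x)) := by
  refine ⟨hp.1, fun x hx y hy a b ha hb hab => ?_⟩
  rcases ha.eq_or_lt with rfl | ha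
  · simp [show b = 1 by linarith]
  rcases hb.eq_or_lt with rfl | hb
  · simp [show a = 1 by linarith]
  have hqx := sub_pos.2 (hq1 x hx)
  have hqy := sub_pos.2 (hq1 y hy)
  have hden : 0 < a * (1 - q x) + b * (1 - q y) := by positivity
  have hqz : a * (1 - q x) + b * (1 - q y) ≤ 1 - q (a • x + b • y) := by
    have := hq.2 hx hy ha.le hb.le hab
    simp only [smul_eq_mul] at this
    linarith
  have hpz := hp.2 hx hy ha.le hb.le hab
  simp only [smul_eq_mul] at hpz ⊢
  have hsedrakyan := Finset.sq_sum_div_le_sum_sq_div Finset.univ ![a * p x, b * p y]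
    (g := ![a * (1 - q x), b * (1 - q y)]) (by
      intro i _
      fin_cases i
      · exact mul_pos ha hqx
      · exact mul_pos hb hqy)
  simp only [Fin.sum_univ_two, Matrix.cons_val_zero, Matrix.cons_val_one] at hsedrakyan
  calc p (a • x + b • y) ^ 2 / (1 - q (a • x + b • y))
      ≤ (a * p x + b * p y) ^ 2 / (a * (1 - q x) + b * (1 - q y)) :=
        div_le_div₀ (sq_nonneg _) (pow_le_pow_left₀ (hp0 _ (hp.1 hx hy ha.le hb.le hab)) hpz 2)
          hden hqz
    _ ≤ (a * p x) ^ 2 / (a * (1 - q x)) + (b * p y) ^ 2 / (b * (1 - q y)) := hsedrakyan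
    _ = a * (p x ^ 2 / (1 - q x)) + b * (p y ^ 2 / (1 - q y)) := by field_simp

section L2OperatorNorm

open scoped Matrix.Norms.L2Operator

variable {d : ℕ}

lemma convexOn_specNorm : ConvexOn ℝ Set.univ (specNorm (d := d)) :=
  convexOn_norm convex_univ

lemma specNorm_lt_one_of_posDef {M : Matrix (Fin d) (Fin d) ℝ} (h₁ : (1 - M).PosDef)
    (h₂ : (1 + M).PosDef) : specNorm M < 1 :=
  l2_opNorm_lt_one_of_posDef h₁ h₂

end L2OperatorNorm

section FrobeniusNorm

attribute [local instance] Matrix.frobeniusNormedAddCommGroup Matrix.frobeniusNormedSpace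

variable {d : ℕ}

lemma frobNorm_eq_frobenius_norm (M : Matrix (Fin d) (Fin d) ℝ) : frobNorm M = ‖M‖ := by
  simp [frobNorm, frobenius_norm_def, Real.sqrt_eq_rpow]

lemma convexOn_frobNorm : ConvexOn ℝ Set.univ (frobNorm (d := d)) := by
  simpa only [← funext frobNorm_eq_frobenius_norm] using
    convexOn_norm (E := Matrix (Fin d) (Fin d) ℝ) convex_univ

end FrobeniusNorm

noncomputable def logDetPenalty {d : ℕ} (c : ℝ) (M : Matrix (Fin d) (Fin d) ℝ) : ℝ :=
  -(1/2) * Real.log (1 - M).det + c * frobNorm M ^ 2 / (1 - specNorm M)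

theorem convexOn_logDetPenalty {d : ℕ} {c : ℝ} (hc : 0 ≤ c) :
    ConvexOn ℝ {M : Matrix (Fin d) (Fin d) ℝ | (1 - M).PosDef ∧ (1 + M).PosDef}
      (logDetPenalty c) := by
  have hsub : {M : Matrix (Fin d) (Fin d) ℝ | (1 - M).PosDef ∧ (1 + M).PosDef} ⊆
      {M | (1 - M).PosDef} := fun M hM => hM.1
  have hconv : Convex ℝ {M : Matrix (Fin d) (Fin d) ℝ | (1 - M).PosDef ∧ (1 + M).PosDef} :=
    concaveOn_log_det_one_sub.1.inter <| convex_setOf_posDef.affine_preimage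
      (AffineMap.const ℝ _ (1 : Matrix (Fin d) (Fin d) ℝ) + AffineMap.id ℝ _)
  have hlog :=
    (concaveOn_log_det_one_sub.subset hsub hconv).neg.smul (by norm_num : (0 : ℝ) ≤ 1 / 2)
  have hquot := ConvexOn.sq_div_one_sub (convexOn_frobNorm.subset (Set.subset_univ _) hconv)
    (fun M _ => Real.sqrt_nonneg _) (convexOn_specNorm.subset (Set.subset_univ _) hconv)
    (fun M hM => specNorm_lt_one_of_posDef hM.1 hM.2)
  refine (hlog.add (hquot.smul hc)).congr fun M _ => ?_
  simp only [logDetPenalty, Pi.add_apply, Pi.neg_apply, smul_eq_mul]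
  ring

theorem stmt13 {d : ℕ} (Θs : Matrix (Fin d) (Fin d) ℝ) (hΘs : Θs.PosDef)
    (c : ℝ) (hc : 0 ≤ c) :
    ConvexOn ℝ
      {H : Matrix (Fin d) (Fin d) ℝ |
        H.IsSymm ∧ (Θs⁻¹ - H).PosDef ∧ (H + Θs⁻¹).PosDef}
      (fun H =>
        -(1/2) * Real.log ((1 - hΘs.posSemidef.sqrt * H * hΘs.posSemidef.sqrt).det)
        + c * (frobNorm (hΘs.posSemidef.sqrt * H * hΘs.posSemidef.sqrt))^2 /
            (1 - specNorm (hΘs.posSemidef.sqrt * H * hΘs.posSemidef.sqrt))) := by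
  rw [hΘs.posSemidef.sqrt_eq_cfc_sqrt, hΘs.setOf_isSymm_inv_sub_posDef_eq_preimage]
  exact (convexOn_logDetPenalty hc).comp_linearMap _
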